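/- arXiv:2605.01313 — 4 statements merged into one kernel-verified Lean document; each statement's English description precedes it below -/
import Mathlib

section
/- Let θ_A, θ_D, φ_A, φ_D be real numbers and set cosη := cos θ_A · cos θ_D + sin θ_A · sin θ_D · cos(φ_A − φ_D). Assume 1 + cosη ≠ 0, and define p = [sin θ_A · sin θ_D + (1 + cos θ_A · cos θ_D) · cos(φ_A − φ_D)] / (1 + cosη) and q = [(cos θ_A + cos θ_D) · sin(φ_A − φ_D)] / (1 + cosη). Then p² + q² = 1. -/
/-- In the SISL scheme, the rotation matrix entries `p`, `q` relating the local
coordinate systems at the departure and arrival points satisfy `p² + q² = 1`. -/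
theorem rotation_matrix_entries_sq_add_sq
    (θA θD φA φD : ℝ)
    (cosη : ℝ)
    (hcosη : cosη = Real.cos θA * Real.cos θD +
      Real.sin θA * Real.sin θD * Real.cos (φA - φD))
    (hne : 1 + cosη ≠ 0)
    (p q : ℝ)
    (hp : p = (Real.sin θA * Real.sin θD +
      (1 + Real.cos θA * Real.cos θD) * Real.cos (φA - φD)) / (1 + cosη))
    (hq : q = ((Real.cos θA + Real.cos θD) * Real.sin (φA - φD)) / (1 + cosη)) :
    p ^ 2 + q ^ 2 = 1 := by
  have hA := Real.sin_sq_add_cos_sq θA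
  have hD := Real.sin_sq_add_cos_sq θD
  have hφ := Real.sin_sq_add_cos_sq (φA - φD)
  subst hp hq hcosη
  field_simp
  ring_nf
  linear_combination (Real.sin (φA - φD) ^ 2 * Real.sin θD ^ 2) * hA +
    (Real.sin (φA - φD) ^ 2 * (1 - Real.cos θA ^ 2)) * hD -
    (Real.sin θA ^ 2 * Real.sin θD ^ 2 - (1 + Real.cos θA * Real.cos θD) ^ 2) * hφ
end

section
/- Fix integers N ≥ 3 and M ≥ 3 and real coefficients f^c_{n,m}, f^s_{n,m}. Let F : ℝ × ℝ → ℝ be the partial-regularity DFS expansion, F(φ,θ) = Σ_{m=0}^{M} f_m^{c,N}(θ) cos(mφ) + Σ_{m=1}^{M} f_m^{s,N}(θ) sin(mφ), where f_0^{c,N}(θ) = Σ_{n=0}^{N} f^c_{n,0} cos(nθ); f_1^{c(s),N}(θ) = Σ_{n=0}^{N−1} f^{c(s)}_{n,1} sin(θ) cos(nθ); for even m ≥ 2, f_m^{c(s),N}(θ) = Σ_{n=1}^{N−1} f^{c(s)}_{n,m} sin(θ) sin(nθ); and for odd m ≥ 3, f_m^{c(s),N}(θ) = Σ_{n=1}^{N−2}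 f^{c(s)}_{n,m} sin²(θ) sin(nθ). Then for all φ, θ ∈ ℝ: F(φ + π, −θ) = F(φ, θ) and F(φ + 2π, θ) = F(φ, θ). -/
open scoped BigOperators Real

noncomputable section

/-- The latitudinal component `f_m^{N}(θ)` of the partial-regularity DFS expansion,
built from coefficients `f n m`. -/
def dfsLat (N : ℕ) (f : ℕ → ℕ → ℝ) (m : ℕ) (θ : ℝ) : ℝ :=
  if m = 0 then ∑ n ∈ Finset.range (N + 1), f n 0 * Real.cos ((n : ℝ) * θ)
  else if m = 1 then ∑ n ∈ Finset.range N, f n 1 * (Real.sin θ * Real.cos ((n : ℝ) * θ))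
  else if m % 2 = 0 then
    ∑ n ∈ Finset.Icc 1 (N - 1), f n m * (Real.sin θ * Real.sin ((n : ℝ) * θ))
  else ∑ n ∈ Finset.Icc 1 (N - 2), f n m * (Real.sin θ ^ 2 * Real.sin ((n : ℝ) * θ))

/-- The partial-regularity DFS expansion
`F(φ,θ) = Σ_{m=0}^{M} f_m^{c,N}(θ) cos(mφ) + Σ_{m=1}^{M} f_m^{s,N}(θ) sin(mφ)`. -/
def dfsF (N M : ℕ) (fc fs : ℕ → ℕ → ℝ) (φ θ : ℝ) : ℝ :=
  ∑ m ∈ Finset.range (M + 1), dfsLat N fc m θ * Real.cos ((m : ℝ) * φ) +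
    ∑ m ∈ Finset.Icc 1 M, dfsLat N fs m θ * Real.sin ((m : ℝ) * φ)

end

/-! The `m`-th latitudinal component has parity `(-1)^m` in `θ`, which is exactly the sign that
`cos (m φ)` and `sin (m φ)` acquire under `φ ↦ φ + π`; the two signs cancel term by term. -/

lemma neg_one_pow_mul_mul_neg_one_pow_mul {R : Type*} [CommRing R] (m : ℕ) (a b : R) :
    (-1) ^ m * a * ((-1) ^ m * b) = a * b := by
  rw [mul_mul_mul_comm, ← mul_pow, neg_one_mul, neg_neg, one_pow, one_mul]

lemma dfsLat_neg (N : ℕ) (f : ℕ → ℕ → ℝ) (m : ℕ) (θ : ℝ) :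
    dfsLat N f m (-θ) = (-1) ^ m * dfsLat N f m θ := by
  unfold dfsLat
  split_ifs with h0 h1 heven
  · simp [h0, mul_neg, Real.cos_neg]
  · simp [h1, mul_neg, Real.sin_neg, Real.cos_neg, Finset.sum_neg_distrib]
  · simp [(Nat.even_iff.mpr heven).neg_one_pow, mul_neg, Real.sin_neg]
  · have hodd : Odd m := Nat.odd_iff.mpr (Nat.mod_two_ne_zero.mp heven)
    simp [hodd.neg_one_pow, mul_neg, Real.sin_neg, Finset.sum_neg_distrib]

theorem dfsF_glide_reflection_and_periodic_general
    (N M : ℕ) (fc fs : ℕ → ℕ → ℝ) :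
    ∀ φ θ : ℝ,
      dfsF N M fc fs (φ + Real.pi) (-θ) = dfsF N M fc fs φ θ ∧
      dfsF N M fc fs (φ + 2 * Real.pi) θ = dfsF N M fc fs φ θ := by
  intro φ θ
  constructor
  · simp only [dfsF, dfsLat_neg, mul_add, Real.cos_add_nat_mul_pi, Real.sin_add_nat_mul_pi,
      neg_one_pow_mul_mul_neg_one_pow_mul]
  · simp only [dfsF, mul_add, Real.cos_add_nat_mul_two_pi, Real.sin_add_nat_mul_two_pi]

/-- The partial-regularity DFS expansion satisfies the double Fourier sphere
compatibility conditions: the glide-reflection symmetry `F(φ+π, −θ) = F(φ, θ)`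
and `2π`-periodicity in `φ`. -/
theorem dfsF_glide_reflection_and_periodic
    (N M : ℕ) (hN : 3 ≤ N) (hM : 3 ≤ M) (fc fs : ℕ → ℕ → ℝ) :
    ∀ φ θ : ℝ,
      dfsF N M fc fs (φ + Real.pi) (-θ) = dfsF N M fc fs φ θ ∧
      dfsF N M fc fs (φ + 2 * Real.pi) θ = dfsF N M fc fs φ θ :=
  dfsF_glide_reflection_and_periodic_general N M fc fs
end

section
/- Fix integers N ≥ 3 and M ≥ 3 and real coefficients f^c_{n,m}, f^s_{n,m}. Let F : ℝ × ℝ → ℝ be the partial-regularity DFS expansion, F(φ,θ) = Σ_{m=0}^{M} f_m^{c,N}(θ) cos(mφ) + Σ_{m=1}^{M} f_m^{s,N}(θ) sin(mφ), where f_0^{c,N}(θ) = Σ_{n=0}^{N} f^c_{n,0} cos(nθ); f_1^{c(s),N}(θ) = Σ_{n=0}^{N−1} f^{c(s)}_{n,1} sin(θ) cos(nθ); for even m ≥ 2, f_m^{c(s),N}(θ) = Σ_{n=1}^{N−1} f^{c(s)}_{n,m} sin(θ) sin(nθ); and for odd m ≥ 3, f_m^{c(s),N}(θ) = Σ_{n=1}^{N−2}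 f^{c(s)}_{n,m} sin²(θ) sin(nθ). Set C := Σ_{n=0}^{N−1} f^c_{n,1} and S := Σ_{n=0}^{N−1} f^s_{n,1}. Then for every φ ∈ ℝ, the partial derivative of F with respect to θ at θ = 0 satisfies ∂F/∂θ (φ, 0) = C·cos(φ) + S·sin(φ). -/
open scoped BigOperators Real

/-
At the pole every latitudinal component carries a factor `sin θ`, `sin θ ^ 2` or `sin (n θ)`
that vanishes at `θ = 0`, except `f₀`, which is even in `θ`. By the product rule only the
wavenumber-one components `sin θ · Σ f n 1 cos (n θ)` have a nonzero derivative there, namely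
`Σ f n 1`, and these multiply `cos φ` and `sin φ`.
-/

open Finset Real

lemma hasDerivAt_cos_const_mul_zero (c : ℝ) : HasDerivAt (fun θ => cos (c * θ)) 0 0 := by
  simpa using ((hasDerivAt_id (0 : ℝ)).const_mul c).cos

lemma hasDerivAt_sin_const_mul (c x : ℝ) :
    HasDerivAt (fun θ => sin (c * θ)) (cos (c * x) * c) x := by
  simpa using ((hasDerivAt_id x).const_mul c).sin

lemma hasDerivAt_sin_mul_zero {g : ℝ → ℝ} {g' : ℝ} (hg : HasDerivAt g g' 0) :
    HasDerivAt (fun θ => sin θ * g θ) (g 0) 0 := by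
  simpa using (hasDerivAt_sin 0).fun_mul hg

lemma hasDerivAt_sin_sq_mul_zero {g : ℝ → ℝ} {g' : ℝ} (hg : HasDerivAt g g' 0) :
    HasDerivAt (fun θ => sin θ ^ 2 * g θ) 0 0 := by
  simpa using ((hasDerivAt_sin 0).fun_pow 2).fun_mul hg

lemma hasDerivAt_dfsLat_zero (N : ℕ) (f : ℕ → ℕ → ℝ) (m : ℕ) :
    HasDerivAt (dfsLat N f m) (if m = 1 then ∑ n ∈ range N, f n 1 else 0) 0 := by
  unfold dfsLat
  rcases eq_or_ne m 0 with rfl | hm0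
  · simpa using HasDerivAt.fun_sum fun (n : ℕ) _ =>
      (hasDerivAt_cos_const_mul_zero (n : ℝ)).const_mul (f n 0)
  rcases eq_or_ne m 1 with rfl | hm1
  · simpa using HasDerivAt.fun_sum fun (n : ℕ) _ =>
      (hasDerivAt_sin_mul_zero (hasDerivAt_cos_const_mul_zero (n : ℝ))).const_mul (f n 1)
  simp only [hm0, hm1, if_false]
  split_ifs
  · simpa using HasDerivAt.fun_sum fun (n : ℕ) _ =>
      (hasDerivAt_sin_mul_zero (hasDerivAt_sin_const_mul (n : ℝ) 0)).const_mul (f n m)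
  · simpa using HasDerivAt.fun_sum fun (n : ℕ) _ =>
      (hasDerivAt_sin_sq_mul_zero (hasDerivAt_sin_const_mul (n : ℝ) 0)).const_mul (f n m)

lemma hasDerivAt_dfsF_zero (N : ℕ) {M : ℕ} (hM : 1 ≤ M) (fc fs : ℕ → ℕ → ℝ) (φ : ℝ) :
    HasDerivAt (dfsF N M fc fs φ)
      ((∑ n ∈ range N, fc n 1) * cos φ + (∑ n ∈ range N, fs n 1) * sin φ) 0 := by
  have hcos := HasDerivAt.fun_sum fun m (_ : m ∈ range (M + 1)) =>
    (hasDerivAt_dfsLat_zero N fc m).mul_const (cos ((m : ℝ) * φ))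
  have hsin := HasDerivAt.fun_sum fun m (_ : m ∈ Icc 1 M) =>
    (hasDerivAt_dfsLat_zero N fs m).mul_const (sin ((m : ℝ) * φ))
  have hmem_range : 1 ∈ range (M + 1) := mem_range.mpr (by omega)
  have hmem_Icc : 1 ∈ Icc 1 M := mem_Icc.mpr ⟨le_rfl, hM⟩
  have h := hcos.fun_add hsin
  simp only [ite_mul, zero_mul, sum_ite_eq', hmem_range, hmem_Icc, if_true, Nat.cast_one,
    one_mul] at h
  exact h

theorem dfsF_meridional_deriv_at_pole_general
    (N M : ℕ) (hM : 3 ≤ M) (fc fs : ℕ → ℕ → ℝ) :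
    ∀ φ : ℝ,
      deriv (fun θ => dfsF N M fc fs φ θ) 0 =
        (∑ n ∈ Finset.range N, fc n 1) * Real.cos φ +
          (∑ n ∈ Finset.range N, fs n 1) * Real.sin φ :=
  fun φ => (hasDerivAt_dfsF_zero N (by omega) fc fs φ).deriv

/-- The meridional derivative of the partial-regularity DFS expansion at the pole
`θ = 0` has only a first azimuthal wavenumber component:
`∂F/∂θ(φ, 0) = C·cos φ + S·sin φ` with `C = Σ fc n 1` and `S = Σ fs n 1`. -/
theorem dfsF_meridional_deriv_at_pole
    (N M : ℕ) (hN : 3 ≤ N) (hM : 3 ≤ M) (fc fs : ℕ → ℕ → ℝ) :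
    ∀ φ : ℝ,
      deriv (fun θ => dfsF N M fc fs φ θ) 0 =
        (∑ n ∈ Finset.range N, fc n 1) * Real.cos φ +
          (∑ n ∈ Finset.range N, fs n 1) * Real.sin φ :=
  dfsF_meridional_deriv_at_pole_general N M hM fc fs
end

section
/- Fix integers N ≥ 3 and M ≥ 3 and real coefficients f^c_{n,m}, f^s_{n,m}. Let F : ℝ × ℝ → ℝ be the partial-regularity DFS expansion, F(φ,θ) = Σ_{m=0}^{M} f_m^{c,N}(θ) cos(mφ) + Σ_{m=1}^{M} f_m^{s,N}(θ) sin(mφ), where f_0^{c,N}(θ) = Σ_{n=0}^{N} f^c_{n,0} cos(nθ); f_1^{c(s),N}(θ) = Σ_{n=0}^{N−1} f^{c(s)}_{n,1} sin(θ) cos(nθ); for even m ≥ 2, f_m^{c(s),N}(θ) = Σ_{n=1}^{N−1} f^{c(s)}_{n,m} sin(θ) sin(nθ); and for odd m ≥ 3, f_m^{c(s),N}(θ) = Σ_{n=1}^{N−2} f^{c(s)}_{n,m} sin²(θ) sin(nθ). Set C := Σ_{n=0}^{N−1} f^c_{n,1} and S := Σ_{n=0}^{N−1} f^s_{n,1}.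 Then for every φ ∈ ℝ, the limit as θ → 0⁺ of (1/sin θ) · ∂F/∂φ (φ, θ) exists and equals −C·sin(φ) + S·cos(φ). -/
open scoped BigOperators Real

/-
Every azimuthal mode `m ≥ 1` of the expansion carries a factor `sin θ`, and the `φ`-derivative
kills the mode `m = 0`. Hence `∂F/∂φ = sin θ · G(φ, θ)` with `G` continuous in `θ`, so
`(1 / sin θ) ∂F/∂φ → G(φ, 0)` as `θ → 0⁺`. At `θ = 0` only the mode `m = 1` survives, and its
reduced latitudinal components equal `C` and `S` there.
-/

open Filter Topology

theorem tendsto_one_div_sin_mul_sin_mul {g : ℝ → ℝ} (hg : ContinuousAt g 0) :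
    Tendsto (fun θ => 1 / Real.sin θ * (Real.sin θ * g θ)) (𝓝[≠] 0) (𝓝 (g 0)) := by
  have hsin : ∀ᶠ θ in 𝓝[≠] (0 : ℝ), Real.sin θ ≠ 0 := by
    simpa using (Real.hasDerivAt_sin 0).eventually_ne (by simp)
  refine (hg.tendsto.mono_left nhdsWithin_le_nhds).congr' ?_
  filter_upwards [hsin] with θ hθ
  field_simp

noncomputable section

/-- `dfsLat N f m θ / sin θ` for `m ≠ 0`, written without the division. -/
def dfsLatReduced (N : ℕ) (f : ℕ → ℕ → ℝ) (m : ℕ) (θ : ℝ) : ℝ :=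
  if m = 1 then ∑ n ∈ Finset.range N, f n 1 * Real.cos ((n : ℝ) * θ)
  else if m % 2 = 0 then ∑ n ∈ Finset.Icc 1 (N - 1), f n m * Real.sin ((n : ℝ) * θ)
  else ∑ n ∈ Finset.Icc 1 (N - 2), f n m * (Real.sin θ * Real.sin ((n : ℝ) * θ))

/-- The quotient `(1 / sin θ) ∂F/∂φ`, written without the division. -/
def dfsFAzimuthalQuot (N M : ℕ) (fc fs : ℕ → ℕ → ℝ) (φ θ : ℝ) : ℝ :=
  ∑ m ∈ Finset.range (M + 1), -((m : ℝ) * dfsLatReduced N fc m θ * Real.sin ((m : ℝ) * φ)) +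
    ∑ m ∈ Finset.Icc 1 M, (m : ℝ) * dfsLatReduced N fs m θ * Real.cos ((m : ℝ) * φ)

end

section

variable (N : ℕ) (f : ℕ → ℕ → ℝ)

theorem dfsLat_eq_sin_mul_dfsLatReduced {m : ℕ} (hm : m ≠ 0) (θ : ℝ) :
    dfsLat N f m θ = Real.sin θ * dfsLatReduced N f m θ := by
  simp only [dfsLat, dfsLatReduced, if_neg hm]
  split_ifs <;> simp only [Finset.mul_sum] <;> exact Finset.sum_congr rfl fun _ _ => by ring

theorem natCast_mul_dfsLat (m : ℕ) (θ : ℝ) :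
    (m : ℝ) * dfsLat N f m θ = Real.sin θ * ((m : ℝ) * dfsLatReduced N f m θ) := by
  rcases eq_or_ne m 0 with rfl | hm
  · simp
  · rw [dfsLat_eq_sin_mul_dfsLatReduced N f hm]
    ring

theorem continuous_dfsLatReduced (m : ℕ) : Continuous (dfsLatReduced N f m) := by
  unfold dfsLatReduced
  split_ifs <;> fun_prop

theorem dfsLatReduced_zero_right (m : ℕ) :
    dfsLatReduced N f m 0 = if m = 1 then ∑ n ∈ Finset.range N, f n 1 else 0 := by
  unfold dfsLatReduced
  split_ifs <;> simp

end

section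

variable (N M : ℕ) (fc fs : ℕ → ℕ → ℝ)

theorem hasDerivAt_dfsF_azimuthal (φ θ : ℝ) :
    HasDerivAt (fun φ' => dfsF N M fc fs φ' θ)
      (∑ m ∈ Finset.range (M + 1), -((m : ℝ) * dfsLat N fc m θ * Real.sin ((m : ℝ) * φ)) +
        ∑ m ∈ Finset.Icc 1 M, (m : ℝ) * dfsLat N fs m θ * Real.cos ((m : ℝ) * φ)) φ := by
  unfold dfsF
  refine .add (.fun_sum fun m _ => ?_) (.fun_sum fun m _ => ?_)
  · exact (((hasDerivAt_id' φ).const_mul (m : ℝ)).cos.const_mul _).congr_deriv (by ring)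
  · exact (((hasDerivAt_id' φ).const_mul (m : ℝ)).sin.const_mul _).congr_deriv (by ring)

theorem deriv_dfsF_azimuthal_eq_sin_mul (φ θ : ℝ) :
    deriv (fun φ' => dfsF N M fc fs φ' θ) φ = Real.sin θ * dfsFAzimuthalQuot N M fc fs φ θ := by
  rw [(hasDerivAt_dfsF_azimuthal N M fc fs φ θ).deriv, dfsFAzimuthalQuot, mul_add,
    Finset.mul_sum, Finset.mul_sum]
  congr 1 <;> refine Finset.sum_congr rfl fun m _ => ?_
  · rw [natCast_mul_dfsLat]
    ring
  · rw [natCast_mul_dfsLat]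
    ring

theorem continuous_dfsFAzimuthalQuot (φ : ℝ) : Continuous (dfsFAzimuthalQuot N M fc fs φ) := by
  unfold dfsFAzimuthalQuot
  have := continuous_dfsLatReduced N fc
  have := continuous_dfsLatReduced N fs
  fun_prop

theorem dfsFAzimuthalQuot_zero_right (hM : 1 ≤ M) (φ : ℝ) :
    dfsFAzimuthalQuot N M fc fs φ 0 =
      -(∑ n ∈ Finset.range N, fc n 1) * Real.sin φ +
        (∑ n ∈ Finset.range N, fs n 1) * Real.cos φ := by
  have h1 : 1 ∈ Finset.range (M + 1) := Finset.mem_range.mpr (by omega)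
  have h1' : 1 ∈ Finset.Icc 1 M := Finset.mem_Icc.mpr ⟨le_rfl, hM⟩
  simp only [dfsFAzimuthalQuot, dfsLatReduced_zero_right, mul_ite, ite_mul, mul_zero, zero_mul,
    Finset.sum_neg_distrib, Finset.sum_ite_eq', if_pos h1, if_pos h1', Nat.cast_one, one_mul]
  ring

end

theorem dfsF_azimuthal_gradient_limit_at_pole_general
    (N M : ℕ) (hM : 3 ≤ M) (fc fs : ℕ → ℕ → ℝ) :
    ∀ φ : ℝ,
      Filter.Tendsto
        (fun θ : ℝ => (1 / Real.sin θ) * deriv (fun φ' => dfsF N M fc fs φ' θ) φ)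
        (nhdsWithin 0 (Set.Ioi 0))
        (nhds (-(∑ n ∈ Finset.range N, fc n 1) * Real.sin φ +
          (∑ n ∈ Finset.range N, fs n 1) * Real.cos φ)) := by
  intro φ
  rw [← dfsFAzimuthalQuot_zero_right N M fc fs (by omega : 1 ≤ M) φ]
  simp_rw [deriv_dfsF_azimuthal_eq_sin_mul]
  exact (tendsto_one_div_sin_mul_sin_mul (continuous_dfsFAzimuthalQuot N M fc fs φ).continuousAt
    ).mono_left (nhdsWithin_mono _ fun θ (hθ : 0 < θ) => hθ.ne')

/-- The azimuthal gradient component `(1/sin θ) ∂F/∂φ` of the partial-regularity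
DFS expansion has a limit as `θ → 0⁺`, equal to `−C·sin φ + S·cos φ` with
`C = Σ fc n 1` and `S = Σ fs n 1`. -/
theorem dfsF_azimuthal_gradient_limit_at_pole
    (N M : ℕ) (hN : 3 ≤ N) (hM : 3 ≤ M) (fc fs : ℕ → ℕ → ℝ) :
    ∀ φ : ℝ,
      Filter.Tendsto
        (fun θ : ℝ => (1 / Real.sin θ) * deriv (fun φ' => dfsF N M fc fs φ' θ) φ)
        (nhdsWithin 0 (Set.Ioi 0))
        (nhds (-(∑ n ∈ Finset.range N, fc n 1) * Real.sin φ +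
          (∑ n ∈ Finset.range N, fs n 1) * Real.cos φ)) :=
  dfsF_azimuthal_gradient_limit_at_pole_general N M hM fc fs
end
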